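/- Validity lemma: Let P ⊆ List M be nonempty and prefix-closed and ≃ an identification of positions on P. If a t-skeleton S on P satisfies: for all s·m·n ∈ S^Even and t·l·r ∈ S^Even with s·m ≃ t·l one has s·m·n ≃ t·l·r, then there exists a valid t-skeleton N on P with S ⊆ N. -/

import Mathlib

/-!
Validity lemma (Lemma 3.14 of "Game semantics of Martin-Löf type theory").
Positions are finite lists over a type `M` of moves.
-/

namespace GameSemantics

variable {M : Type*}

/-- A set of positions is prefix-closed: every prefix of a member belongs to it. -/
def PrefClosed (X : Set (List M)) : Prop :=
  ∀ ⦃s t : List M⦄, s <+: t → t ∈ X → s ∈ X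

/-- (Tree): nonempty and prefix-closed. -/
def Tree (S : Set (List M)) : Prop :=
  S.Nonempty ∧ ∀ (s : List M) (m : M), s ++ [m] ∈ S → s ∈ S

/-- (Edet): determinacy on even-length positions. -/
def Edet (S : Set (List M)) : Prop :=
  ∀ (s : List M) (m n n' : M), s ++ [m, n] ∈ S → s ++ [m, n'] ∈ S →
    Even (s ++ [m, n]).length → n = n'

/-- (Oinc) relative to `P`: inclusiveness on odd-length positions of `P`. -/
def Oinc (S P : Set (List M)) : Prop :=
  ∀ (s : List M) (m : M), s ++ [m] ∈ P → Odd (s ++ [m]).length → s ∈ S → s ++ [m] ∈ S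

/-- A t-skeleton on `P`. -/
def TSkelOn (P S : Set (List M)) : Prop :=
  S ⊆ P ∧ Tree S ∧ Edet S ∧ Oinc S P

/-- An identification of positions on `P`: an equivalence relation on `P`
satisfying the axioms I1, I2 and I3. -/
structure IsIdent (P : Set (List M)) (R : List M → List M → Prop) : Prop where
  mem_left : ∀ ⦃s t : List M⦄, R s t → s ∈ P
  mem_right : ∀ ⦃s t : List M⦄, R s t → t ∈ P
  refl : ∀ s ∈ P, R s s
  symm : ∀ ⦃s t : List M⦄, R s t → R t s
  trans : ∀ ⦃s t u : List M⦄, R s t → R t u → R s u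
  length_eq : ∀ ⦃s t : List M⦄, R s t → s.length = t.length
  init : ∀ ⦃s t : List M⦄ ⦃m n : M⦄, R (s ++ [m]) (t ++ [n]) → R s t
  extend : ∀ ⦃s t : List M⦄ (m : M), R s t → s ++ [m] ∈ P →
    ∃ n : M, t ++ [n] ∈ P ∧ R (s ++ [m]) (t ++ [n])

/-- `S ≲ T` for t-skeletons on `(P, R)`. -/
def TLe (P : Set (List M)) (R : List M → List M → Prop)
    (S T : Set (List M)) : Prop :=
  ∀ (s : List M) (m n : M), s ++ [m, n] ∈ S → Even (s ++ [m, n]).length →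
    ∀ (t : List M) (l : M), t ++ [l] ∈ T → Odd (t ++ [l]).length →
      R (s ++ [m]) (t ++ [l]) →
      ∃ r : M, t ++ [l, r] ∈ T ∧ R (s ++ [m, n]) (t ++ [l, r])

/-- Validity of a t-skeleton on `(P, R)`: `S ≃ S`, i.e. `S ≲ S`. -/
def TValid (P : Set (List M)) (R : List M → List M → Prop)
    (S : Set (List M)) : Prop :=
  TLe P R S S ∧ TLe P R S S

/-- The set of admissible responses at position `u`. -/
def Resp (P S : Set (List M)) (R : List M → List M → Prop) (u : List M) : Set M :=
  {r | u ++ [r] ∈ P ∧ ∃ s m n, s ++ [m, n] ∈ S ∧ Even (s ++ [m, n]).length ∧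
      R (s ++ [m]) u ∧ R (s ++ [m, n]) (u ++ [r])}

open Classical in
/-- The canonical response at position `u`. -/
noncomputable def resp [Nonempty M] (P S : Set (List M))
    (R : List M → List M → Prop) (u : List M) : M :=
  if h : ∃ n, u ++ [n] ∈ S then h.choose else Classical.epsilon (· ∈ Resp P S R u)

/-- The saturation of `S`. -/
inductive NSet [Nonempty M] (P S : Set (List M)) (R : List M → List M → Prop) :
    List M → Prop
  | nil : NSet P S R []
  | omove {u : List M} {m : M} : NSet P S R u → u ++ [m] ∈ P →
      Odd (u ++ [m]).length → NSet P S R (u ++ [m])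
  | pmove {u : List M} : NSet P S R u → Odd u.length →
      resp P S R u ∈ Resp P S R u → NSet P S R (u ++ [resp P S R u])

lemma resp_eq_of_mem [Nonempty M] {P S : Set (List M)} {R : List M → List M → Prop}
    (hE : Edet S) {s : List M} {l m : M} (h : (s ++ [l]) ++ [m] ∈ S)
    (he : Even ((s ++ [l]) ++ [m]).length) : resp P S R (s ++ [l]) = m := by
  have hex : ∃ n, (s ++ [l]) ++ [n] ∈ S := ⟨m, h⟩
  rw [resp, dif_pos hex]
  have hc : (s ++ [l]) ++ [hex.choose] ∈ S := hex.choose_spec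
  have ha : ∀ (x : M), (s ++ [l]) ++ [x] = s ++ [l, x] := by simp
  refine hE s l hex.choose m ?_ ?_ ?_
  · rw [← ha]; exact hc
  · rw [← ha]; exact h
  · simp only [List.length_append, List.length_cons, List.length_nil] at he ⊢
    rw [Nat.even_iff] at he ⊢
    omega

lemma resp_mem [Nonempty M] {P S : Set (List M)} {R : List M → List M → Prop}
    (hR : IsIdent P R) (hSP : S ⊆ P) {u : List M} (hu : Odd u.length) (huP : u ∈ P)
    (hne : (Resp P S R u).Nonempty) : resp P S R u ∈ Resp P S R u := by
  rw [resp]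
  split_ifs with h
  · obtain ⟨s, l, rfl⟩ : ∃ s l, u = s ++ [l] := by
      rcases List.eq_nil_or_concat u with rfl | ⟨s, l, rfl⟩
      · simp at hu
      · exact ⟨s, l, List.concat_eq_append⟩
    have hc : (s ++ [l]) ++ [h.choose] ∈ S := h.choose_spec
    have ha : (s ++ [l]) ++ [h.choose] = s ++ [l, h.choose] := by simp
    refine ⟨hSP hc, s, l, h.choose, ha ▸ hc, ?_, hR.refl _ huP, ?_⟩
    · simp only [List.length_append, List.length_cons, List.length_nil] at hu ⊢
      rcases hu with ⟨k, hk⟩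
      exact ⟨k + 1, by omega⟩
    · rw [← ha]; exact hR.refl _ (hSP hc)
  · exact Classical.epsilon_spec hne

lemma resp_equiv {P S : Set (List M)} {R : List M → List M → Prop}
    (hR : IsIdent P R)
    (hdet : ∀ (s t : List M) (m n l r : M),
      s ++ [m, n] ∈ S → Even (s ++ [m, n]).length →
      t ++ [l, r] ∈ S → Even (t ++ [l, r]).length →
      R (s ++ [m]) (t ++ [l]) → R (s ++ [m, n]) (t ++ [l, r]))
    {u : List M} {r₁ r₂ : M} (h1 : r₁ ∈ Resp P S R u) (h2 : r₂ ∈ Resp P S R u) :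
    R (u ++ [r₁]) (u ++ [r₂]) := by
  obtain ⟨hP1, a, b, c, hw, hwe, hab, habc⟩ := h1
  obtain ⟨hP2, a', b', c', hw', hwe', hab', habc'⟩ := h2
  have h := hdet a a' b c b' c' hw hwe hw' hwe' (hR.trans hab (hR.symm hab'))
  exact hR.trans (hR.symm habc) (hR.trans h habc')

lemma nset_drop [Nonempty M] {P S : Set (List M)} {R : List M → List M → Prop}
    {v : List M} (h : NSet P S R v) : ∀ u m, v = u ++ [m] → NSet P S R u := by
  cases h with
  | nil => intro u m h; simp at h
  | omove hu hp ho =>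
      intro u' m' heq
      obtain ⟨rfl, -⟩ := List.append_inj' heq rfl
      exact hu
  | pmove hu ho hr =>
      intro u' m' heq
      obtain ⟨rfl, -⟩ := List.append_inj' heq rfl
      exact hu

lemma nset_even [Nonempty M] {P S : Set (List M)} {R : List M → List M → Prop}
    {v : List M} (h : NSet P S R v) : ∀ u r, v = u ++ [r] → Even v.length →
    NSet P S R u ∧ r = resp P S R u ∧ resp P S R u ∈ Resp P S R u := by
  cases h with
  | nil => intro u r h; simp at h
  | omove hu hp ho =>
      intro u' r heq he
      exact absurd he (Nat.not_even_iff_odd.mpr ho)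
  | @pmove u hu ho hr =>
      intro u' r heq he
      obtain ⟨rfl, h2⟩ := List.append_inj' heq rfl
      obtain rfl : resp P S R u = r := by simpa using h2
      exact ⟨hu, rfl, hr⟩

lemma nset_subset_P [Nonempty M] {P S : Set (List M)} {R : List M → List M → Prop}
    (hPne : P.Nonempty) (hPpc : PrefClosed P) {v : List M} (h : NSet P S R v) :
    v ∈ P := by
  induction h with
  | nil => obtain ⟨p, hp⟩ := hPne; exact hPpc (List.nil_prefix (l := p)) hp
  | omove hu hp ho ih => exact hp
  | pmove hu ho hr ih => exact hr.1

/-- **Validity lemma**: if a t-skeleton `S` on `P` is deterministic up to the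
identification `R` of positions, then it is contained in some valid t-skeleton
`N` on `P`. -/
theorem validity_lemma (P : Set (List M)) (R : List M → List M → Prop)
    (hPne : P.Nonempty) (hPpc : PrefClosed P) (hR : IsIdent P R)
    (S : Set (List M)) (hS : TSkelOn P S)
    (hdet : ∀ (s t : List M) (m n l r : M),
      s ++ [m, n] ∈ S → Even (s ++ [m, n]).length →
      t ++ [l, r] ∈ S → Even (t ++ [l, r]).length →
      R (s ++ [m]) (t ++ [l]) → R (s ++ [m, n]) (t ++ [l, r])) :
    ∃ N : Set (List M), TSkelOn P N ∧ TValid P R N ∧ S ⊆ N := by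
  by_cases hM : Nonempty M
  case neg =>
    refine ⟨S, hS, ⟨?_, ?_⟩, subset_rfl⟩ <;>
      · intro s m n _ _ _ _ _ _ _
        exact absurd ⟨m⟩ hM
  haveI := hM
  set N : Set (List M) := {v | NSet P S R v} with hN
  have hNP : N ⊆ P := fun v hv => nset_subset_P hPne hPpc hv
  have ha : ∀ (u : List M) (x y : M), (u ++ [x]) ++ [y] = u ++ [x, y] := by simp
  -- S ⊆ N
  have hSN : S ⊆ N := by
    intro u hu
    induction u using List.reverseRecOn with
    | nil => exact NSet.nil
    | append_singleton t m ih =>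
      have ht : t ∈ S := hS.2.1.2 t m hu
      have htN : NSet P S R t := ih ht
      rcases Nat.even_or_odd (t ++ [m]).length with he | ho
      · have htodd : Odd t.length := by
          simp only [List.length_append, List.length_cons, List.length_nil] at he
          rw [Nat.even_iff] at he; rw [Nat.odd_iff]; omega
        obtain ⟨s, l, rfl⟩ : ∃ s l, t = s ++ [l] := by
          rcases List.eq_nil_or_concat t with rfl | ⟨s, l, rfl⟩
          · simp at htodd
          · exact ⟨s, l, List.concat_eq_append⟩
        have hre : resp P S R (s ++ [l]) = m := resp_eq_of_mem hS.2.2.1 hu he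
        have hmem : resp P S R (s ++ [l]) ∈ Resp P S R (s ++ [l]) := by
          rw [hre]
          exact ⟨hS.1 hu, s, l, m, ha s l m ▸ hu, by rw [← ha]; exact he,
            hR.refl _ (hS.1 ht), by rw [← ha]; exact hR.refl _ (hS.1 hu)⟩
        have := NSet.pmove htN htodd hmem
        rwa [hre] at this
      · exact NSet.omove htN (hS.1 hu) ho
  -- N is a t-skeleton
  have hskel : TSkelOn P N := by
    refine ⟨hNP, ⟨⟨[], NSet.nil⟩, fun s m h => nset_drop h s m rfl⟩, ?_, ?_⟩
    · intro s m n n' h1 h2 he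
      have e1 := nset_even (ha s m n ▸ h1) (s ++ [m]) n (by simp) (by rw [ha]; exact he)
      have e2 := nset_even (ha s m n' ▸ h2) (s ++ [m]) n' (by simp)
        (by rw [ha]
            simp only [List.length_append, List.length_cons, List.length_nil] at he ⊢
            rwa [show s.length + (1 + 1) = s.length + 2 from rfl] at he ⊢)
      rw [e1.2.1, e2.2.1]
    · intro s m hp ho hs
      exact NSet.omove hs hp ho
  -- validity
  have hle : TLe P R N N := by
    intro s m n hs he t l ht ho hrel
    obtain ⟨-, hn, hrs⟩ := nset_even (ha s m n ▸ hs) (s ++ [m]) n (by simp)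
      (by rw [ha]; exact he)
    have hnResp : n ∈ Resp P S R (s ++ [m]) := hn ▸ hrs
    obtain ⟨hP1, a, b, c, hw, hwe, hab, habc⟩ := hnResp
    simp only [ha] at habc
    have hab' : R (a ++ [b]) (t ++ [l]) := hR.trans hab hrel
    obtain ⟨r, hrP, hr2⟩ := hR.extend c hab' (by rw [ha]; exact hS.1 hw)
    rw [ha a b c] at hr2
    have hrResp : r ∈ Resp P S R (t ++ [l]) := ⟨hrP, a, b, c, hw, hwe, hab', hr2⟩
    simp only [ha] at hr2
    have hrm : resp P S R (t ++ [l]) ∈ Resp P S R (t ++ [l]) :=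
      resp_mem hR hS.1 ho (hNP ht) ⟨r, hrResp⟩
    refine ⟨resp P S R (t ++ [l]), ?_, ?_⟩
    · have := NSet.pmove ht ho hrm
      rwa [ha] at this
    · have e := resp_equiv hR hdet hrResp hrm
      simp only [ha] at e
      exact hR.trans (hR.trans (hR.symm habc) hr2) e
  exact ⟨N, hskel, ⟨hle, hle⟩, hSN⟩

end GameSemantics
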